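/- In the reduction from δ-Hitting Set to RDSCP (d = 1, t = δ + 1), any cover T of the constructed universe U with |T| ≤ δ + 1 satisfies |T ∩ F^V| = δ and |T ∩ F^S| = 1. -/

import Mathlib

/-- The universe of the constructed RDSCP instance:
elements `p^j_x` (for `j ∈ [m]`, `x ∈ [δ]`), elements `u^V_Q` for every
`(δ-1)`-subset `Q` of `[n]`, and the special element `u*`. -/
def HSUni (n m δ : ℕ) :=
  (Fin m × Fin δ) ⊕ ({Q : Finset (Fin n) // Q.card = δ - 1} ⊕ Unit)

/-- The set `s^V_i`: all `p^j_x` with `S_j[x] = v_i` together with all `u^V_Q` with `i ∉ Q`. -/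
def sV {n m δ : ℕ} (S : Fin m → Fin δ → Fin n) (i : Fin n) : Set (HSUni n m δ) :=
  {u | (∃ j x, u = Sum.inl (j, x) ∧ S j x = i) ∨ ∃ Q, u = Sum.inr (Sum.inl Q) ∧ i ∉ Q.1}

/-- The set `s^S_j`: the element `u*` together with `U^S \ P^j`. -/
def sS {n m δ : ℕ} (j : Fin m) : Set (HSUni n m δ) :=
  {u | u = Sum.inr (Sum.inr ()) ∨ ∃ j' x, u = Sum.inl (j', x) ∧ j' ≠ j}

/-- The constructed family `F = F^V ∪ F^S`. -/
def HSFam {n m δ : ℕ} (S : Fin m → Fin δ → Fin n) : Set (Set (HSUni n m δ)) :=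
  Set.range (sV S) ∪ Set.range sS

/-! Only sets of `F^S` contain `u*`, so `T` has at least one of them; fewer than `δ` sets of `F^V`
miss some `u^V_Q`, so `T` has at least `δ` of those. With `|T| ≤ δ + 1` both bounds are attained. -/

section

variable {n m δ : ℕ}

lemma ustar_mem_sS (j : Fin m) : (Sum.inr (Sum.inr ()) : HSUni n m δ) ∈ sS j :=
  Or.inl rfl

lemma ustar_notMem_sV (S : Fin m → Fin δ → Fin n) (i : Fin n) :
    (Sum.inr (Sum.inr ()) : HSUni n m δ) ∉ sV S i := by
  rintro (⟨_, _, h, -⟩ | ⟨_, h, -⟩) <;> cases h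

lemma uQ_mem_sV_iff (S : Fin m → Fin δ → Fin n) (i : Fin n)
    (Q : {Q : Finset (Fin n) // Q.card = δ - 1}) :
    (Sum.inr (Sum.inl Q) : HSUni n m δ) ∈ sV S i ↔ i ∉ Q.1 := by
  refine ⟨?_, fun h => Or.inr ⟨Q, rfl, h⟩⟩
  rintro (⟨_, _, h, -⟩ | ⟨Q', h, hQ'⟩)
  · cases h
  · cases h
    exact hQ'

lemma uQ_notMem_sS (j : Fin m) (Q : {Q : Finset (Fin n) // Q.card = δ - 1}) :
    (Sum.inr (Sum.inl Q) : HSUni n m δ) ∉ sS j := by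
  rintro (h | ⟨_, _, h, -⟩) <;> cases h

lemma sV_ne_sS (S : Fin m → Fin δ → Fin n) (i : Fin n) (j : Fin m) : sV S i ≠ sS j :=
  fun h => ustar_notMem_sV S i (h ▸ ustar_mem_sS j)

/-- Pick one index per set of `V` (so at most `δ - 1` of them) and a `(δ - 1)`-set `Q`
containing them all. -/
lemma exists_uQ_notMem_of_card_lt (S : Fin m → Fin δ → Fin n) (hδn : δ ≤ n)
    (V : Finset (Set (HSUni n m δ))) (hV : ↑V ⊆ Set.range (sV S)) (hcard : V.card < δ) :
    ∃ Q : {Q : Finset (Fin n) // Q.card = δ - 1}, ∀ A ∈ V, Sum.inr (Sum.inl Q) ∉ A := by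
  classical
  obtain ⟨I, -, hinjOn, rfl⟩ :=
    Finset.exists_subset_injOn_image_eq_of_surjOn (f := sV S) Set.univ V
      (by rwa [Set.SurjOn, Set.image_univ])
  rw [Finset.card_image_of_injOn hinjOn] at hcard
  obtain ⟨Q, hIQ, -, hQ⟩ := Finset.exists_subsuperset_card_eq (Finset.subset_univ I)
    (by omega : I.card ≤ δ - 1) (by rw [Finset.card_univ, Fintype.card_fin]; omega)
  refine ⟨⟨Q, hQ⟩, fun A hA => ?_⟩
  obtain ⟨i, hi, rfl⟩ := Finset.mem_image.mp hA
  exact fun hmem => (uQ_mem_sV_iff S i ⟨Q, hQ⟩).mp hmem (hIQ hi)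

open Classical

variable {S : Fin m → Fin δ → Fin n} {T : Finset (Set (HSUni n m δ))}

lemma card_filter_sV_add_card_filter_sS (hT : ↑T ⊆ HSFam S) :
    (T.filter (fun A => A ∈ Set.range (sV S))).card +
      (T.filter (fun A => A ∈ Set.range (sS : Fin m → Set (HSUni n m δ)))).card = T.card := by
  rw [← Finset.card_filter_add_card_filter_not (s := T) (fun A => A ∈ Set.range (sV S))]
  congr 2
  refine Finset.filter_congr fun A hA => ⟨?_, ?_⟩
  · rintro ⟨j, rfl⟩ ⟨i, hi⟩
    exact sV_ne_sS S i j hi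
  · exact (hT hA).resolve_left

lemma card_filter_sS_pos (hT : ↑T ⊆ HSFam S)
    (hcover : ⋃₀ (T : Set (Set (HSUni n m δ))) = Set.univ) :
    0 < (T.filter (fun A => A ∈ Set.range (sS : Fin m → Set (HSUni n m δ)))).card := by
  obtain ⟨A, hA, hmem⟩ := hcover ▸ Set.mem_univ (Sum.inr (Sum.inr ()) : HSUni n m δ)
  rcases hT hA with ⟨i, rfl⟩ | hAS
  · exact absurd hmem (ustar_notMem_sV S i)
  · exact Finset.card_pos.mpr ⟨A, Finset.mem_filter.mpr ⟨hA, hAS⟩⟩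

lemma le_card_filter_sV (hδn : δ ≤ n) (hT : ↑T ⊆ HSFam S)
    (hcover : ⋃₀ (T : Set (Set (HSUni n m δ))) = Set.univ) :
    δ ≤ (T.filter (fun A => A ∈ Set.range (sV S))).card := by
  by_contra! hlt
  obtain ⟨Q, hQ⟩ :=
    exists_uQ_notMem_of_card_lt S hδn _ (fun A hA => (Finset.mem_filter.mp hA).2) hlt
  obtain ⟨A, hA, hmem⟩ := hcover ▸ Set.mem_univ (Sum.inr (Sum.inl Q) : HSUni n m δ)
  rcases hT hA with hAV | ⟨j, rfl⟩
  · exact hQ A (Finset.mem_filter.mpr ⟨hA, hAV⟩) hmem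
  · exact uQ_notMem_sS j Q hmem

end

open Classical in
theorem stmt8_general (n m δ : ℕ) (hδn : δ ≤ n)
    (S : Fin m → Fin δ → Fin n)
    (T : Finset (Set (HSUni n m δ))) (hT : ↑T ⊆ HSFam S) (hcard : T.card ≤ δ + 1)
    (hcover : ⋃₀ (T : Set (Set (HSUni n m δ))) = Set.univ) :
    (T.filter (fun A => A ∈ Set.range (sV S))).card = δ ∧
    (T.filter (fun A => A ∈ Set.range (sS : Fin m → Set (HSUni n m δ)))).card = 1 := by
  have hsplit := card_filter_sV_add_card_filter_sS hT
  have hS := card_filter_sS_pos hT hcover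
  have hV := le_card_filter_sV hδn hT hcover
  omega

open Classical in
/-- In the δ-Hitting Set reduction, any cover `T` of the constructed universe with
`|T| ≤ δ + 1` contains exactly `δ` sets from `F^V` and exactly one set from `F^S`. -/
theorem stmt8 (n m δ k : ℕ) (hδ : 2 ≤ δ) (hδn : δ ≤ n)
    (S : Fin m → Fin δ → Fin n) (hinj : ∀ j, Function.Injective (S j))
    (T : Finset (Set (HSUni n m δ))) (hT : ↑T ⊆ HSFam S) (hcard : T.card ≤ δ + 1)
    (hcover : ⋃₀ (T : Set (Set (HSUni n m δ))) = Set.univ) :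
    (T.filter (fun A => A ∈ Set.range (sV S))).card = δ ∧
    (T.filter (fun A => A ∈ Set.range (sS : Fin m → Set (HSUni n m δ)))).card = 1 :=
  stmt8_general n m δ hδn S T hT hcard hcover
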